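/- Let (Ω, ℱ, P) be a probability space equipped with a filtration (ℱ_t)_{t ∈ [0,∞)}, and let Z = (Z_t)_{t ≥ 0} be a nonnegative supermartingale with respect to this filtration (each Z_t integrable). Let Z_∞ : Ω → ℝ be an integrable random variable such that Z_t → Z_∞ almost surely as t → ∞. If there is a constant c > 0 such that for every t ≥ 0 one has Z_t ≤ c · E[Z_∞ | ℱ_t] almost surely, then the family {Z_t : t ≥ 0} is uniformly integrable. -/

import Mathlib

open MeasureTheory Filter Topology

/-- Lemma 3.1: a nonnegative supermartingale `Z` dominated by a constant multiple of the
conditional expectations of its a.s. limit `Zinf` is uniformly integrable. -/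
theorem supermartingale_uniformIntegrable_of_le_condexp
    {Ω : Type*} {m0 : MeasurableSpace Ω} {μ : Measure Ω} [IsProbabilityMeasure μ]
    (ℱ : Filtration NNReal m0) (Z : NNReal → Ω → ℝ) (Zinf : Ω → ℝ)
    (hsuper : Supermartingale Z ℱ μ)
    (hnonneg : ∀ t, 0 ≤ᵐ[μ] Z t)
    (hZinf_int : Integrable Zinf μ)
    (hlim : ∀ᵐ ω ∂μ, Tendsto (fun t => Z t ω) atTop (𝓝 (Zinf ω)))
    (c : ℝ) (hc : 0 < c)
    (hbound : ∀ t, Z t ≤ᵐ[μ] fun ω => c * (μ[Zinf | ℱ t]) ω) :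
    UniformIntegrable Z 1 μ := by
  obtain ⟨hmeas, hunif, C, hC⟩ := hZinf_int.uniformIntegrable_condExp_filtration (f := ℱ)
  have hbound' : ∀ t, ∀ᵐ ω ∂μ, ‖Z t ω‖ ≤ ‖(c • (μ[Zinf | ℱ t])) ω‖ := by
    intro t
    filter_upwards [hbound t, hnonneg t] with ω h1 h2
    rw [Real.norm_of_nonneg h2]
    calc Z t ω ≤ c * (μ[Zinf | ℱ t]) ω := h1
      _ ≤ c * ‖(μ[Zinf | ℱ t]) ω‖ := by gcongr; exact le_abs_self _
      _ ≤ ‖(c • (μ[Zinf | ℱ t])) ω‖ := by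
          simp [norm_smul, abs_of_pos hc]
  refine ⟨fun t => (hsuper.integrable t).aestronglyMeasurable, ?_, ?_⟩
  · intro ε hε
    obtain ⟨δ, hδ, h⟩ := hunif (div_pos hε hc)
    refine ⟨δ, hδ, fun t s hs hμs => ?_⟩
    calc eLpNorm (s.indicator (Z t)) 1 μ
        ≤ eLpNorm (s.indicator (c • (μ[Zinf | ℱ t]))) 1 μ := by
          apply eLpNorm_mono_ae
          filter_upwards [hbound' t] with ω hω
          by_cases hωs : ω ∈ s
          · simpa [Set.indicator_of_mem hωs] using hω
          · simp [Set.indicator_of_notMem hωs]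
      _ = ‖c‖₊ • eLpNorm (s.indicator (μ[Zinf | ℱ t])) 1 μ := by
          have hind : s.indicator (c • μ[Zinf | ℱ t]) = c • s.indicator (μ[Zinf | ℱ t]) := by
            ext ω; by_cases hωs : ω ∈ s <;> simp [hωs]
          rw [hind, eLpNorm_const_smul, ENNReal.smul_def, smul_eq_mul, enorm_eq_nnnorm]
      _ ≤ ‖c‖₊ • ENNReal.ofReal (ε / c) := by
          gcongr
          exact h t s hs hμs
      _ = ENNReal.ofReal ε := by
          rw [ENNReal.smul_def, smul_eq_mul,
            ← ENNReal.ofReal_coe_nnreal, ← ENNReal.ofReal_mul (by positivity)]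
          congr 1
          rw [coe_nnnorm, Real.norm_eq_abs, abs_of_pos hc]
          field_simp
  · refine ⟨‖c‖₊ * C, fun t => ?_⟩
    calc eLpNorm (Z t) 1 μ ≤ eLpNorm (c • (μ[Zinf | ℱ t])) 1 μ :=
          eLpNorm_mono_ae (hbound' t)
      _ = ‖c‖₊ • eLpNorm (μ[Zinf | ℱ t]) 1 μ := eLpNorm_const_smul _ _ _ _
      _ ≤ ‖c‖₊ * C := by
          rw [ENNReal.smul_def, smul_eq_mul]
          gcongr
          exact hC t
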